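/- In the metric space Heis_7 = {(w_0,w) ∈ H × H : tr w_0 = n(w)} ⊂ ∂∞H²_H with the Cygan distance, for a finite chain C contained in the horizontal subspace {(ζ,u) : u = 0} given as the Euclidean sphere of radius R centered at the origin, the diameter of C for the Cygan distance equals √2 times its diameter for the modified Cygan distance. -/

import Mathlib

noncomputable section

open Quaternion

variable (n : ℕ)

def qIm (x : Quaternion ℝ) : Quaternion ℝ := (x - star x) / 2

def qDot (ζ ζ' : Fin (n - 1) → Quaternion ℝ) : Quaternion ℝ :=
  ∑ p, star (ζ p) * ζ' p

/-- The group law `(ζ,u)(ζ',u') = (ζ+ζ', u+u'+2 Im(conj(ζ)·ζ'))`. -/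
def heisNMul (p q : (Fin (n - 1) → Quaternion ℝ) × Quaternion ℝ) :
    (Fin (n - 1) → Quaternion ℝ) × Quaternion ℝ :=
  (p.1 + q.1, p.2 + q.2 + 2 * qIm (qDot n p.1 q.1))

/-- The Cygan distance: left-invariant, with `d_Cyg((ζ,u),0) = (n(ζ)²+n(u))^{1/4}`. -/
def dCyg (x y : (Fin (n - 1) → Quaternion ℝ) × Quaternion ℝ) : ℝ :=
  ((∑ i, normSq ((heisNMul n (-x.1, -x.2) y).1 i)) ^ 2
      + normSq (heisNMul n (-x.1, -x.2) y).2) ^ ((1 : ℝ) / 4)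

/-- The modified Cygan distance: left-invariant, with
`d''_Cyg((ζ,u),0) = (n(ζ)²+n(u))^{1/2} / ((n(ζ)²+n(u))^{1/2}+n(ζ))^{1/2}`. -/
def dCyg'' (x y : (Fin (n - 1) → Quaternion ℝ) × Quaternion ℝ) : ℝ :=
  (((∑ i, normSq ((heisNMul n (-x.1, -x.2) y).1 i)) ^ 2
      + normSq (heisNMul n (-x.1, -x.2) y).2) ^ ((1 : ℝ) / 2)) /
    ((((∑ i, normSq ((heisNMul n (-x.1, -x.2) y).1 i)) ^ 2
        + normSq (heisNMul n (-x.1, -x.2) y).2) ^ ((1 : ℝ) / 2)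
      + ∑ i, normSq ((heisNMul n (-x.1, -x.2) y).1 i)) ^ ((1 : ℝ) / 2))

/-- The horizontal chain of radius `R` centered at the origin:
the Euclidean sphere `{(ζ,0) : n(ζ) = R²}` in `Heis = ℍ^{n-1} × Im ℍ`. -/
def horizChain (R : ℝ) : Set ((Fin (n - 1) → Quaternion ℝ) × Quaternion ℝ) :=
  {p | (∑ i, normSq (p.1 i)) = R ^ 2 ∧ p.2 = 0}

/-!
For `x = (ζ, 0)` and `y = (ζ', 0)` on the chain, `x⁻¹ y = (ζ' - ζ, -2 Im q)` with `q = ⟨ζ, ζ'⟩`.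
Hence `F := n(ζ' - ζ) = 2R² - 2 Re q` and `n(-2 Im q) = 4 (|q|² - (Re q)²)`, and Cauchy–Schwarz
`|q| ≤ R²` gives `F ≤ 4R²` and `F² + n(-2 Im q) ≤ 4R² F`. These bound `d_Cyg` by `2R` and
`d''_Cyg` by `√2 R`, and both bounds are attained at antipodal points `±ζ`, where `q = -R²` is real.
-/

namespace Quaternion

lemma qIm_eq_im (x : ℍ[ℝ]) : qIm x = x.im := by
  rw [qIm, div_eq_mul_inv, show (2 : ℍ[ℝ]) = ((2 : ℝ) : ℍ[ℝ]) from rfl, ← coe_inv,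
    mul_coe_eq_smul]
  ext <;> simp <;> ring

lemma normSq_im (x : ℍ[ℝ]) : normSq x.im = normSq x - x.re ^ 2 := by
  simp only [normSq_def', re_im, imI_im, imJ_im, imK_im]
  ring

lemma re_sq_le_normSq (x : ℍ[ℝ]) : x.re ^ 2 ≤ normSq x := by
  linarith [normSq_im x, normSq_nonneg (a := x.im)]

lemma normSq_two_mul (x : ℍ[ℝ]) : normSq (2 * x) = 4 * normSq x := by
  rw [show (2 : ℍ[ℝ]) * x = (2 : ℝ) • x from coe_mul_eq_smul 2 x, normSq_smul]
  norm_num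

lemma normSq_neg_add (x y : ℍ[ℝ]) :
    normSq (-x + y) = normSq x + normSq y - 2 * (star x * y).re := by
  rw [normSq_add, normSq_neg]
  simp only [re_mul, neg_mul, re_neg, re_star, imI_star, imJ_star, imK_star]
  ring

lemma re_sum {ι : Type*} (s : Finset ι) (f : ι → ℍ[ℝ]) :
    (∑ i ∈ s, f i).re = ∑ i ∈ s, (f i).re :=
  map_sum (QuaternionAlgebra.reₗ _ _ _) f s

lemma coe_sum {ι : Type*} (s : Finset ι) (f : ι → ℝ) :
    ((∑ i ∈ s, f i : ℝ) : ℍ[ℝ]) = ∑ i ∈ s, (f i : ℍ[ℝ]) :=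
  map_sum (algebraMap ℝ ℍ[ℝ]) f s

end Quaternion

lemma pow_four_rpow_one_div_four {ρ : ℝ} (hρ : 0 ≤ ρ) : (ρ ^ 4) ^ ((1 : ℝ) / 4) = ρ := by
  rw [one_div, show (4 : ℝ) = (4 : ℕ) by norm_num, Real.pow_rpow_inv_natCast hρ four_ne_zero]

lemma rpow_one_div_four_le {A ρ : ℝ} (hA : 0 ≤ A) (hρ : 0 ≤ ρ) (h : A ≤ ρ ^ 4) :
    A ^ ((1 : ℝ) / 4) ≤ ρ := by
  calc A ^ ((1 : ℝ) / 4) ≤ (ρ ^ 4) ^ ((1 : ℝ) / 4) := by gcongr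
    _ = ρ := pow_four_rpow_one_div_four hρ

lemma sq_le_two_mul_sq_mul_add {N F R : ℝ} (hN : 0 ≤ N) (hF : F ≤ 4 * R ^ 2)
    (h : N ^ 2 ≤ 4 * R ^ 2 * F) : N ^ 2 ≤ 2 * R ^ 2 * (N + F) := by
  -- if `F ≤ N` use `N² ≤ 4R²F`; if `N ≤ F` use `N² ≤ N F ≤ 4R²N`
  rcases le_total F N with hFN | hNF
  · nlinarith
  · nlinarith

lemma div_sqrt_add_le {N F c : ℝ} (hN : 0 ≤ N) (hc : 0 ≤ c) (h : N ^ 2 ≤ c ^ 2 * (N + F)) :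
    N / √(N + F) ≤ c := by
  refine div_le_of_le_mul₀ (Real.sqrt_nonneg _) hc ?_
  calc N = √(N ^ 2) := (Real.sqrt_sq hN).symm
    _ ≤ √(c ^ 2 * (N + F)) := Real.sqrt_le_sqrt h
    _ = c * √(N + F) := by rw [Real.sqrt_mul (sq_nonneg c), Real.sqrt_sq hc]

section

variable {n}

lemma qDot_neg_left (ζ ζ' : Fin (n - 1) → ℍ[ℝ]) : qDot n (-ζ) ζ' = -qDot n ζ ζ' := by
  simp [qDot]

lemma qDot_self (ζ : Fin (n - 1) → ℍ[ℝ]) : qDot n ζ ζ = ((∑ i, normSq (ζ i) : ℝ) : ℍ[ℝ]) := by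
  simp only [qDot, star_mul_self, coe_sum]

lemma sum_normSq_neg_add (ζ ζ' : Fin (n - 1) → ℍ[ℝ]) :
    ∑ i, normSq ((-ζ + ζ') i)
      = ∑ i, normSq (ζ i) + ∑ i, normSq (ζ' i) - 2 * (qDot n ζ ζ').re := by
  simp only [Pi.add_apply, Pi.neg_apply, normSq_neg_add, Finset.sum_sub_distrib,
    Finset.sum_add_distrib, ← Finset.mul_sum, qDot, re_sum]

lemma normSq_qDot_le (ζ ζ' : Fin (n - 1) → ℍ[ℝ]) :
    normSq (qDot n ζ ζ') ≤ (∑ i, normSq (ζ i)) * ∑ i, normSq (ζ' i) := by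
  have h : ‖qDot n ζ ζ'‖ ≤ ∑ i, ‖ζ i‖ * ‖ζ' i‖ :=
    (norm_sum_le _ _).trans_eq (by simp [norm_mul])
  simp only [normSq_eq_norm_mul_self, ← sq]
  calc ‖qDot n ζ ζ'‖ ^ 2 ≤ (∑ i, ‖ζ i‖ * ‖ζ' i‖) ^ 2 := by gcongr
    _ ≤ (∑ i, ‖ζ i‖ ^ 2) * ∑ i, ‖ζ' i‖ ^ 2 := Finset.sum_mul_sq_le_sq_mul_sq _ _ _

end

section

variable {n} {R : ℝ}

section

variable {ζ ζ' : Fin (n - 1) → ℍ[ℝ]}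

lemma normSq_qDot_le_of_sum_normSq_eq (hζ : ∑ i, normSq (ζ i) = R ^ 2)
    (hζ' : ∑ i, normSq (ζ' i) = R ^ 2) : normSq (qDot n ζ ζ') ≤ R ^ 2 * R ^ 2 := by
  simpa only [hζ, hζ'] using normSq_qDot_le ζ ζ'

lemma sum_normSq_neg_add_le (hζ : ∑ i, normSq (ζ i) = R ^ 2)
    (hζ' : ∑ i, normSq (ζ' i) = R ^ 2) : ∑ i, normSq ((-ζ + ζ') i) ≤ 4 * R ^ 2 := by
  have hq := normSq_qDot_le_of_sum_normSq_eq hζ hζ'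
  rw [sum_normSq_neg_add, hζ, hζ']
  nlinarith [re_sq_le_normSq (qDot n ζ ζ')]

lemma cygan_gauge_pow_four_le (hζ : ∑ i, normSq (ζ i) = R ^ 2)
    (hζ' : ∑ i, normSq (ζ' i) = R ^ 2) :
    (∑ i, normSq ((-ζ + ζ') i)) ^ 2 + normSq (2 * qIm (qDot n (-ζ) ζ'))
      ≤ 4 * R ^ 2 * ∑ i, normSq ((-ζ + ζ') i) := by
  have hq := normSq_qDot_le_of_sum_normSq_eq hζ hζ'
  rw [qIm_eq_im, qDot_neg_left, im_neg, mul_neg, normSq_neg, normSq_two_mul, normSq_im,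
    sum_normSq_neg_add, hζ, hζ']
  nlinarith

end

variable {x y p : (Fin (n - 1) → ℍ[ℝ]) × ℍ[ℝ]}

lemma heisNMul_neg_of_mem_horizChain (hx : x ∈ horizChain n R) (hy : y ∈ horizChain n R) :
    heisNMul n (-x.1, -x.2) y = (-x.1 + y.1, 2 * qIm (qDot n (-x.1) y.1)) := by
  simp [heisNMul, hx.2, hy.2]

lemma dCyg_le_of_mem_horizChain (hR : 0 ≤ R) (hx : x ∈ horizChain n R)
    (hy : y ∈ horizChain n R) : dCyg n x y ≤ 2 * R := by
  have hF0 : 0 ≤ ∑ i, normSq ((-x.1 + y.1) i) := Finset.sum_nonneg fun _ _ ↦ normSq_nonneg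
  have hF := sum_normSq_neg_add_le (n := n) hx.1 hy.1
  have hgauge := cygan_gauge_pow_four_le (n := n) hx.1 hy.1
  rw [dCyg, heisNMul_neg_of_mem_horizChain hx hy]
  refine rpow_one_div_four_le (add_nonneg (sq_nonneg _) normSq_nonneg) (by positivity) ?_
  nlinarith

lemma dCyg''_le_of_mem_horizChain (hR : 0 ≤ R) (hx : x ∈ horizChain n R)
    (hy : y ∈ horizChain n R) : dCyg'' n x y ≤ √2 * R := by
  have hF := sum_normSq_neg_add_le (n := n) hx.1 hy.1
  have hgauge := cygan_gauge_pow_four_le (n := n) hx.1 hy.1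
  have hA : 0 ≤ (∑ i, normSq ((-x.1 + y.1) i)) ^ 2 + normSq (2 * qIm (qDot n (-x.1) y.1)) :=
    add_nonneg (sq_nonneg _) normSq_nonneg
  rw [dCyg'', heisNMul_neg_of_mem_horizChain hx hy, ← Real.sqrt_eq_rpow, ← Real.sqrt_eq_rpow]
  refine div_sqrt_add_le (Real.sqrt_nonneg _) (by positivity) ?_
  rw [mul_pow, Real.sq_sqrt zero_le_two]
  exact sq_le_two_mul_sq_mul_add (Real.sqrt_nonneg _) hF (by rwa [Real.sq_sqrt hA])

lemma exists_mem_horizChain (hn : 2 ≤ n) (R : ℝ) : ∃ p, p ∈ horizChain n R := by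
  refine ⟨(Pi.single ⟨0, by omega⟩ (R : ℍ[ℝ]), 0), ?_, rfl⟩
  simp [Pi.single_apply, apply_ite normSq, normSq_coe]

lemma neg_mem_horizChain (hp : p ∈ horizChain n R) : -p ∈ horizChain n R := by
  simpa [horizChain] using hp

lemma heisNMul_neg_self_of_mem_horizChain (hp : p ∈ horizChain n R) :
    heisNMul n (-p.1, -p.2) (-p) = (-p.1 + -p.1, 0) := by
  rw [heisNMul_neg_of_mem_horizChain hp (neg_mem_horizChain hp), Prod.fst_neg, qDot_self,
    qIm_eq_im, im_coe, mul_zero]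

lemma sum_normSq_neg_add_neg_of_mem_horizChain (hp : p ∈ horizChain n R) :
    ∑ i, normSq ((-p.1 + -p.1) i) = 4 * R ^ 2 := by
  simp only [Pi.add_apply, ← two_mul, normSq_two_mul, Pi.neg_apply, normSq_neg, ← Finset.mul_sum,
    hp.1]

lemma dCyg_neg_right_of_mem_horizChain (hR : 0 ≤ R) (hp : p ∈ horizChain n R) :
    dCyg n p (-p) = 2 * R := by
  rw [dCyg, heisNMul_neg_self_of_mem_horizChain hp, sum_normSq_neg_add_neg_of_mem_horizChain hp,
    map_zero, add_zero, show (4 * R ^ 2) ^ 2 = (2 * R) ^ 4 by ring,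
    pow_four_rpow_one_div_four (by positivity)]

lemma dCyg''_neg_right_of_mem_horizChain (hR : 0 < R) (hp : p ∈ horizChain n R) :
    dCyg'' n p (-p) = √2 * R := by
  rw [dCyg'', heisNMul_neg_self_of_mem_horizChain hp, sum_normSq_neg_add_neg_of_mem_horizChain hp,
    map_zero, add_zero, ← Real.sqrt_eq_rpow, ← Real.sqrt_eq_rpow, Real.sqrt_sq (by positivity),
    show 4 * R ^ 2 + 4 * R ^ 2 = (2 * R * √2) ^ 2 by rw [mul_pow, Real.sq_sqrt zero_le_two]; ring,
    Real.sqrt_sq (by positivity)]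
  field_simp
  rw [Real.sq_sqrt zero_le_two]
  ring

lemma isGreatest_dCyg_horizChain (hn : 2 ≤ n) (hR : 0 ≤ R) :
    IsGreatest {r : ℝ | ∃ x ∈ horizChain n R, ∃ y ∈ horizChain n R, r = dCyg n x y} (2 * R) := by
  obtain ⟨p, hp⟩ := exists_mem_horizChain hn R
  refine ⟨⟨p, hp, -p, neg_mem_horizChain hp, (dCyg_neg_right_of_mem_horizChain hR hp).symm⟩, ?_⟩
  rintro _ ⟨x, hx, y, hy, rfl⟩
  exact dCyg_le_of_mem_horizChain hR hx hy

lemma isGreatest_dCyg''_horizChain (hn : 2 ≤ n) (hR : 0 < R) :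
    IsGreatest {r : ℝ | ∃ x ∈ horizChain n R, ∃ y ∈ horizChain n R, r = dCyg'' n x y}
      (√2 * R) := by
  obtain ⟨p, hp⟩ := exists_mem_horizChain hn R
  refine ⟨⟨p, hp, -p, neg_mem_horizChain hp, (dCyg''_neg_right_of_mem_horizChain hR hp).symm⟩, ?_⟩
  rintro _ ⟨x, hx, y, hy, rfl⟩
  exact dCyg''_le_of_mem_horizChain hR.le hx hy

end

/-- For a finite chain `C` contained in the horizontal subspace, given as the Euclidean
sphere of radius `R` centered at the origin, the diameter of `C` for the Cygan distance
equals `√2` times its diameter for the modified Cygan distance. -/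
theorem chain_diameter_cygan_eq_sqrt_two_mul_modified (hn : 2 ≤ n) (R : ℝ) (hR : 0 < R) :
    sSup {r : ℝ | ∃ x ∈ horizChain n R, ∃ y ∈ horizChain n R, r = dCyg n x y}
      = Real.sqrt 2 *
        sSup {r : ℝ | ∃ x ∈ horizChain n R, ∃ y ∈ horizChain n R, r = dCyg'' n x y} := by
  rw [(isGreatest_dCyg_horizChain hn hR.le).csSup_eq,
    (isGreatest_dCyg''_horizChain hn hR).csSup_eq, ← mul_assoc, Real.mul_self_sqrt zero_le_two]
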